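/- Let p and q be coprime positive integers. Then ‖B(p,q) − (p,q)‖² + ‖B(q,p)‖² does not exceed 2·(p²+q²); moreover ‖B(p,q) − (p,q)‖ = ‖B(q,p)‖ ≤ ‖(p,q)‖. -/

import Mathlib

/-!
Two Bezout pairs of `p, q` whose first coordinates differ by less than `p` coincide. Since
`(p - d, q - c)` is a Bezout pair of `p, q` with `0 < p - d ≤ p`, it equals `B(p,q) = (a, b)`,
so `B(p,q) - (p,q) = -(d, c)` is the reflection of `B(q,p) = (c, d)` across the diagonal, and
`0 < c ≤ q`, `0 ≤ d < p` bound its norm by `‖(p,q)‖`.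
-/

/-- The point (x,y) in the Euclidean plane. -/
noncomputable def V (x y : ℝ) : EuclideanSpace ℝ (Fin 2) := WithLp.toLp 2 ![x, y]

lemma norm_V_sq (x y : ℝ) : ‖V x y‖ ^ 2 = x ^ 2 + y ^ 2 := by
  simp [EuclideanSpace.norm_sq_eq, V, Fin.sum_univ_two]

lemma V_sub (x y u v : ℝ) : V x y - V u v = V (x - u) (y - v) := by
  ext i
  fin_cases i <;> simp [V]

theorem Int.bezout_coeff_unique {p q a b a' b' : ℤ} (h : a * q - b * p = 1)
    (h' : a' * q - b' * p = 1) (hlt : |a - a'| < p) : a = a' ∧ b = b' := by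
  have hcop : IsCoprime p q := ⟨-b, a, by linarith⟩
  have hdvd : p ∣ (a - a') * q := ⟨b - b', by linarith⟩
  have ha : a - a' = 0 := Int.eq_zero_of_abs_lt_dvd (hcop.dvd_of_dvd_mul_right hdvd) hlt
  have hp : p ≠ 0 := (lt_of_le_of_lt (abs_nonneg _) hlt).ne'
  have hb : (b - b') * p = 0 := by linear_combination h' - h + q * ha
  exact ⟨by linarith, by linarith [(mul_eq_zero.1 hb).resolve_right hp]⟩

theorem bezout_norm_bounds_general (p q a b c d : ℤ)
    (ha : 0 < a) (hap : a ≤ p)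
    (hbez : a * q - b * p = 1)
    (hc : 0 < c) (hcq : c ≤ q) (hd : 0 ≤ d) (hdp : d < p)
    (hbez' : c * p - d * q = 1) :
    ‖V (a : ℝ) (b : ℝ) - V (p : ℝ) (q : ℝ)‖ ^ 2 + ‖V (c : ℝ) (d : ℝ)‖ ^ 2
        ≤ 2 * ((p : ℝ) ^ 2 + (q : ℝ) ^ 2) ∧
      ‖V (a : ℝ) (b : ℝ) - V (p : ℝ) (q : ℝ)‖ = ‖V (c : ℝ) (d : ℝ)‖ ∧
      ‖V (c : ℝ) (d : ℝ)‖ ≤ ‖V (p : ℝ) (q : ℝ)‖ := by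
  obtain ⟨rfl, rfl⟩ : a = p - d ∧ b = q - c :=
    Int.bezout_coeff_unique hbez (by linarith) (abs_sub_lt_iff.2 ⟨by linarith, by linarith⟩)
  have hrefl : ‖V ↑(p - d) ↑(q - c) - V p q‖ = ‖V c d‖ :=
    (sq_eq_sq₀ (norm_nonneg _) (norm_nonneg _)).1 <| by
      rw [V_sub, norm_V_sq, norm_V_sq]; push_cast; ring
  have hle : ‖V c d‖ ≤ ‖V p q‖ :=
    (pow_le_pow_iff_left₀ (norm_nonneg _) (norm_nonneg _) two_ne_zero).1 <| by
      rw [norm_V_sq, norm_V_sq]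
      have hc' : (0 : ℝ) < c := by exact_mod_cast hc
      have hcq' : (c : ℝ) ≤ q := by exact_mod_cast hcq
      have hd' : (0 : ℝ) ≤ d := by exact_mod_cast hd
      have hdp' : (d : ℝ) ≤ p := by exact_mod_cast hdp.le
      nlinarith
  refine ⟨?_, hrefl, hle⟩
  rw [hrefl, ← two_mul, ← norm_V_sq]
  gcongr

/-- ‖B(p,q) − (p,q)‖² + ‖B(q,p)‖² ≤ 2(p²+q²), and moreover
‖B(p,q) − (p,q)‖ = ‖B(q,p)‖ ≤ ‖(p,q)‖. Here (a,b) = B(p,q), (c,d) = B(q,p). -/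
theorem bezout_norm_bounds (p q a b c d : ℤ) (hp : 0 < p) (hq : 0 < q)
    (hpq : IsCoprime p q)
    (ha : 0 < a) (hap : a ≤ p) (hb : 0 ≤ b) (hbq : b < q)
    (hbez : a * q - b * p = 1)
    (hc : 0 < c) (hcq : c ≤ q) (hd : 0 ≤ d) (hdp : d < p)
    (hbez' : c * p - d * q = 1) :
    ‖V (a : ℝ) (b : ℝ) - V (p : ℝ) (q : ℝ)‖ ^ 2 + ‖V (c : ℝ) (d : ℝ)‖ ^ 2
        ≤ 2 * ((p : ℝ) ^ 2 + (q : ℝ) ^ 2) ∧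
      ‖V (a : ℝ) (b : ℝ) - V (p : ℝ) (q : ℝ)‖ = ‖V (c : ℝ) (d : ℝ)‖ ∧
      ‖V (c : ℝ) (d : ℝ)‖ ≤ ‖V (p : ℝ) (q : ℝ)‖ :=
  bezout_norm_bounds_general p q a b c d ha hap hbez hc hcq hd hdp hbez'
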